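/- arXiv:0801.2115 — 5 statements merged into one kernel-verified Lean document; each statement's English description precedes it below -/
import Mathlib

section
/- For the independent Bernoulli sequence with P(Y_n=1)=1/n for n≥1, the expected number of d-strings E[Z_d] = Σ_{n≥1} E[Y_n(1-Y_{n+1})···(1-Y_{n+d-1})Y_{n+d}] equals 1/d for every d≥1. -/
/-!
Since `1 - 1 / (x + j) = (x + j - 1) / (x + j)`, the product over `j ∈ [1, d)` telescopes to
`x / (x + d - 1)`. With `x = n + 1` the `n`-th summand becomes `1 / (n + d) - 1 / (n + d + 1)`,
so the series telescopes to `1 / d`.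
-/

open Finset Filter Topology

lemma prod_Ico_one_sub_one_div_add {x : ℝ} (hx : 0 < x) {d : ℕ} (hd : 1 ≤ d) :
    ∏ j ∈ Ico 1 d, (1 - 1 / (x + j)) = x / (x + d - 1) := by
  induction d, hd using Nat.le_induction with
  | base => simp [div_self hx.ne']
  | succ n hn ih =>
    have hxn : 0 < x + n - 1 := by
      have : (1 : ℝ) ≤ n := by exact_mod_cast hn
      linarith
    have hxn' : 0 < x + n := by linarith
    rw [prod_Ico_succ_top hn, ih, Nat.cast_succ, ← add_assoc, add_sub_cancel_right]
    field_simp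

lemma hasSum_sub_succ_of_antitone {f : ℕ → ℝ} {l : ℝ} (hf : Antitone f)
    (hl : Tendsto f atTop (𝓝 l)) : HasSum (fun n ↦ f n - f (n + 1)) (f 0 - l) := by
  rw [hasSum_iff_tendsto_nat_of_nonneg (fun n ↦ sub_nonneg.2 (hf n.le_succ))]
  simp_rw [sum_range_sub']
  exact hl.const_sub (f 0)

/-- For the independent Bernoulli sequence with `P(Y_n = 1) = 1/n` for `n ≥ 1`,
the expected number of `d`-strings,
`E[Z_d] = ∑_{n ≥ 1} E[Y_n (1-Y_{n+1}) ⋯ (1-Y_{n+d-1}) Y_{n+d}]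
        = ∑_{n ≥ 1} (1/n) ∏_{j=1}^{d-1} (1 - 1/(n+j)) (1/(n+d))`,
equals `1/d` for every `d ≥ 1`. -/
theorem stmt0 (d : ℕ) (hd : 1 ≤ d) :
    ∑' n : ℕ, (1 / ((n : ℝ) + 1)) *
        (∏ j ∈ Finset.Ico 1 d, (1 - 1 / ((n : ℝ) + 1 + (j : ℝ)))) *
        (1 / ((n : ℝ) + 1 + (d : ℝ))) = 1 / (d : ℝ) := by
  set f : ℕ → ℝ := fun n ↦ 1 / ((n : ℝ) + d)
  have hterm (n : ℕ) : (1 / ((n : ℝ) + 1)) *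
      (∏ j ∈ Ico 1 d, (1 - 1 / ((n : ℝ) + 1 + (j : ℝ)))) *
      (1 / ((n : ℝ) + 1 + (d : ℝ))) = f n - f (n + 1) := by
    have hnd : (0 : ℝ) < n + d := by positivity
    rw [prod_Ico_one_sub_one_div_add (by positivity) hd]
    simp only [f, Nat.cast_succ, add_sub_cancel_right, add_right_comm _ (1 : ℝ)]
    field_simp
    ring
  have hf : Antitone f := fun m n hmn ↦
    one_div_le_one_div_of_le (by positivity) (by gcongr)
  have hlim : Tendsto f atTop (𝓝 0) :=
    tendsto_const_nhds.div_atTop (tendsto_atTop_add_const_right _ _ tendsto_natCast_atTop_atTop)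
  simp_rw [hterm]
  simpa [f] using (hasSum_sub_succ_of_antitone hf hlim).tsum_eq
end

section
/- For the independent Bernoulli sequence Bern(a,b) with P(Y_n=1)=a/(a+b+n-1) for n≥1 (a>0, b≥0), the expected number of d-strings satisfies E[Z_d] = Σ_{n≥1} [a/(a+b+n-1)] · [∏_{j=1}^{d-1} (b+n+j-1)/(a+b+n+j-1)] · [a/(a+b+n+d-1)], and this sum is finite for every d≥1. -/
/-!
`Z_d` is the sum over `n` of the indicators of the windows
`Y_{n+1} = 1, Y_{n+2} = ⋯ = Y_{n+d} = 0, Y_{n+1+d} = 1`. Monotone convergence exchanges expectation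
and sum; the coordinates of a window being distinct, independence factorises the expectation of
each window into the product of its Bernoulli marginals, which is the `n`-th summand. The middle
factors are at most `1` and the two end factors at most `a / (a + b + n)`, so the summands are
`O(1 / n²)`.
-/

open Finset MeasureTheory ProbabilityTheory
open scoped ENNReal

theorem Finset.prod_range_succ_ite_ends {M : Type*} [CommMonoid M] {d : ℕ} (hd : 1 ≤ d)
    (F G : ℕ → M) :
    ∏ k ∈ range (d + 1), (if k = 0 ∨ k = d then F k else G k)
      = F 0 * (∏ k ∈ Ico 1 d, G k) * F d := by
  rw [prod_range_succ, range_eq_Ico, prod_eq_prod_Ico_succ_bot (by omega)]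
  have hmid : ∏ k ∈ Ico 1 d, (if k = 0 ∨ k = d then F k else G k) = ∏ k ∈ Ico 1 d, G k :=
    prod_congr rfl fun k hk => if_neg (by simp only [mem_Ico] at hk; omega)
  simp only [hmid, true_or, or_true, if_true]

section Bernoulli

variable {Ω : Type*} [MeasurableSpace Ω] {μ : Measure Ω} {X : Ω → ℕ}

theorem lintegral_natCast_eq_measure_eq_one (hX : Measurable X) (h : ∀ ω, X ω ≤ 1) :
    ∫⁻ ω, (X ω : ℝ≥0∞) ∂μ = μ {ω | X ω = 1} := by
  have hind : (fun ω => (X ω : ℝ≥0∞)) = {ω | X ω = 1}.indicator 1 := by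
    ext ω
    rcases Nat.le_one_iff_eq_zero_or_eq_one.1 (h ω) with h0 | h1 <;> simp [*]
  rw [hind]
  exact lintegral_indicator_one (hX (measurableSet_singleton 1))

theorem lintegral_natCast_one_sub_eq_measure_eq_zero (hX : Measurable X) :
    ∫⁻ ω, ((1 - X ω : ℕ) : ℝ≥0∞) ∂μ = μ {ω | X ω = 0} := by
  rw [lintegral_natCast_eq_measure_eq_one (X := fun ω => 1 - X ω)
    (measurable_from_nat.comp hX) (fun ω => by omega)]
  congr 1 with ω
  simp only [Set.mem_ofPred_eq]
  omega

theorem lintegral_natCast_one_sub_eq_ofReal [IsProbabilityMeasure μ] (hX : Measurable X)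
    (h : ∀ ω, X ω ≤ 1) {p : ℝ} (hp0 : 0 ≤ p) (hp : μ {ω | X ω = 1} = ENNReal.ofReal p) :
    ∫⁻ ω, ((1 - X ω : ℕ) : ℝ≥0∞) ∂μ = ENNReal.ofReal (1 - p) := by
  have hcompl : {ω | X ω = 0} = {ω | X ω = 1}ᶜ := by
    ext ω
    have := h ω
    simp only [Set.mem_ofPred_eq, Set.mem_compl_iff]
    omega
  have hmeas : MeasurableSet {ω | X ω = 1} := hX (measurableSet_singleton 1)
  rw [lintegral_natCast_one_sub_eq_measure_eq_zero hX, hcompl, prob_compl_eq_one_sub hmeas, hp,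
    ENNReal.ofReal_sub 1 hp0, ENNReal.ofReal_one]

end Bernoulli

theorem ProbabilityTheory.iIndepFun.lintegral_dString {Ω : Type*} [MeasurableSpace Ω]
    {μ : Measure Ω} {Y : ℕ → Ω → ℕ} (hY : iIndepFun Y μ) (hmeas : ∀ n, Measurable (Y n))
    {d : ℕ} (hd : 1 ≤ d) (m : ℕ) :
    ∫⁻ ω, ((Y m ω * (∏ j ∈ Ico 1 d, (1 - Y (m + j) ω)) * Y (m + d) ω : ℕ) : ℝ≥0∞) ∂μ
      = (∫⁻ ω, (Y m ω : ℝ≥0∞) ∂μ) * (∏ j ∈ Ico 1 d, ∫⁻ ω, ((1 - Y (m + j) ω : ℕ) : ℝ≥0∞) ∂μ)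
          * ∫⁻ ω, (Y (m + d) ω : ℝ≥0∞) ∂μ := by
  set f : ℕ → ℕ → ℝ≥0∞ := fun k y => if k = 0 ∨ k = d then y else ((1 - y : ℕ) : ℝ≥0∞)
  have hwindow : iIndepFun (fun k => f k ∘ Y (m + k)) μ :=
    (hY.precomp (add_right_injective m)).comp f fun _ => measurable_from_nat
  have hfactor := lintegral_prod_eq_prod_lintegral_of_indepFun (range (d + 1)) _ hwindow
    fun k => measurable_from_nat.comp (hmeas _)
  have hcases : ∀ k, ∫⁻ ω, f k (Y (m + k) ω) ∂μ = if k = 0 ∨ k = d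
      then ∫⁻ ω, (Y (m + k) ω : ℝ≥0∞) ∂μ else ∫⁻ ω, ((1 - Y (m + k) ω : ℕ) : ℝ≥0∞) ∂μ := by
    intro k
    split_ifs with hk <;> simp only [f, hk, if_true, if_false]
  simp only [Function.comp_apply, hcases] at hfactor
  simp only [f, prod_range_succ_ite_ends hd, add_zero] at hfactor
  simpa only [Nat.cast_mul, Nat.cast_prod] using hfactor

/-- The probability that a `d`-string of `Bern(a, b)` starts at time `n + 1`. -/
noncomputable def dStringWeight (a b : ℝ) (d n : ℕ) : ℝ :=
  (a / (a + b + n)) * (∏ j ∈ Ico 1 d, ((b + n + j) / (a + b + n + j))) * (a / (a + b + n + d))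

section dStringWeight

variable {a b : ℝ}

theorem dStringWeight_nonneg (ha : 0 ≤ a) (hb : 0 ≤ b) (d n : ℕ) :
    0 ≤ dStringWeight a b d n := by
  unfold dStringWeight
  have := prod_nonneg fun (j : ℕ) (_ : j ∈ Ico 1 d) =>
    div_nonneg (by positivity : 0 ≤ b + n + j) (by positivity : 0 ≤ a + b + n + j)
  positivity

theorem dStringWeight_le_sq (ha : 0 < a) (hb : 0 ≤ b) (d n : ℕ) :
    dStringWeight a b d n ≤ (a / (a + b + n)) ^ 2 := by
  have hprod : ∏ j ∈ Ico 1 d, ((b + n + j) / (a + b + n + j)) ≤ 1 :=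
    prod_le_one (fun j _ => by positivity) fun j _ =>
      (div_le_one (by positivity)).2 (by linarith)
  have hlast : a / (a + b + n + d) ≤ a / (a + b + n) :=
    div_le_div_of_nonneg_left ha.le (by positivity) (by linarith [(d.cast_nonneg : (0 : ℝ) ≤ d)])
  calc dStringWeight a b d n ≤ a / (a + b + n) * 1 * (a / (a + b + n)) := by
        unfold dStringWeight; gcongr
    _ = (a / (a + b + n)) ^ 2 := by ring

theorem summable_dStringWeight (ha : 0 < a) (hb : 0 ≤ b) (d : ℕ) :
    Summable (dStringWeight a b d) := by
  have hsq : Summable fun n : ℕ => a ^ 2 * (1 / |n + (a + b)| ^ (2 : ℝ)) :=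
    ((Real.summable_one_div_nat_add_rpow (a + b) 2).2 one_lt_two).mul_left _
  refine hsq.of_nonneg_of_le (dStringWeight_nonneg ha.le hb d) fun n => ?_
  rw [abs_of_pos (by positivity), Real.rpow_two, add_comm (n : ℝ)]
  calc dStringWeight a b d n ≤ (a / (a + b + n)) ^ 2 := dStringWeight_le_sq ha hb d n
    _ = a ^ 2 * (1 / (a + b + n) ^ 2) := by rw [div_pow, mul_one_div]

end dStringWeight

section BernModel

variable {Ω : Type*} [MeasurableSpace Ω] {μ : Measure Ω} {a b : ℝ} {Y : ℕ → Ω → ℕ}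

theorem measure_shift_eq_one_of_bern
    (hp : ∀ n : ℕ, 1 ≤ n → μ {ω | Y n ω = 1} = ENNReal.ofReal (a / (a + b + n - 1))) (n k : ℕ) :
    μ {ω | Y (n + 1 + k) ω = 1} = ENNReal.ofReal (a / (a + b + n + k)) := by
  rw [hp _ (by omega)]
  push_cast
  ring_nf

theorem lintegral_dString_eq_dStringWeight [IsProbabilityMeasure μ] (ha : 0 < a) (hb : 0 ≤ b)
    (hmeas : ∀ n, Measurable (Y n)) (hval : ∀ n ω, Y n ω ≤ 1) (hindep : iIndepFun Y μ)
    (hp : ∀ n : ℕ, 1 ≤ n → μ {ω | Y n ω = 1} = ENNReal.ofReal (a / (a + b + n - 1)))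
    {d : ℕ} (hd : 1 ≤ d) (n : ℕ) :
    ∫⁻ ω, ((Y (n + 1) ω * (∏ j ∈ Ico 1 d, (1 - Y (n + 1 + j) ω)) * Y (n + 1 + d) ω : ℕ) : ℝ≥0∞) ∂μ
      = ENNReal.ofReal (dStringWeight a b d n) := by
  have hone : ∀ k : ℕ,
      ∫⁻ ω, (Y (n + 1 + k) ω : ℝ≥0∞) ∂μ = ENNReal.ofReal (a / (a + b + n + k)) := fun k => by
    rw [lintegral_natCast_eq_measure_eq_one (hmeas _) (hval _), measure_shift_eq_one_of_bern hp]
  have hfirst : ∫⁻ ω, (Y (n + 1) ω : ℝ≥0∞) ∂μ = ENNReal.ofReal (a / (a + b + n)) := by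
    simpa using hone 0
  have hzero : ∀ k : ℕ, ∫⁻ ω, ((1 - Y (n + 1 + k) ω : ℕ) : ℝ≥0∞) ∂μ
      = ENNReal.ofReal ((b + n + k) / (a + b + n + k)) := by
    intro k
    have hpos : 0 < a + b + n + k := by positivity
    rw [lintegral_natCast_one_sub_eq_ofReal (hmeas _) (hval _) (by positivity)
      (measure_shift_eq_one_of_bern hp n k)]
    congr 1
    field_simp
    ring
  rw [hindep.lintegral_dString hmeas hd, prod_congr rfl fun j _ => hzero j, hone d, hfirst,
    ← ENNReal.ofReal_prod_of_nonneg fun j _ => by positivity,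
    ← ENNReal.ofReal_mul (by positivity), ← ENNReal.ofReal_mul (by positivity)]
  rfl

end BernModel

/-- For the independent Bernoulli sequence `Bern(a,b)` with `P(Y_n = 1) = a/(a+b+n-1)`
for `n ≥ 1` (`a > 0`, `b ≥ 0`), the expected number of `d`-strings satisfies
`E[Z_d] = ∑_{n ≥ 1} [a/(a+b+n-1)] ∏_{j=1}^{d-1} [(b+n+j-1)/(a+b+n+j-1)] [a/(a+b+n+d-1)]`,
and this sum is finite (the summand family is summable), for every `d ≥ 1`.
(Below the sum over `n ≥ 1` is reindexed by `n : ℕ` via `n ↦ n+1`.) -/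
theorem stmt1 {Ω : Type*} [MeasurableSpace Ω] (μ : Measure Ω) [IsProbabilityMeasure μ]
    (a b : ℝ) (ha : 0 < a) (hb : 0 ≤ b)
    (Y : ℕ → Ω → ℕ) (hmeas : ∀ n, Measurable (Y n)) (hval : ∀ n ω, Y n ω ≤ 1)
    (hindep : iIndepFun Y μ)
    (hp : ∀ n : ℕ, 1 ≤ n → μ {ω | Y n ω = 1} = ENNReal.ofReal (a / (a + b + n - 1)))
    (d : ℕ) (hd : 1 ≤ d) :
    (∫⁻ ω, (∑' n : ℕ,
        ((Y (n + 1) ω * (∏ j ∈ Finset.Ico 1 d, (1 - Y (n + 1 + j) ω)) *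
          Y (n + 1 + d) ω : ℕ) : ℝ≥0∞)) ∂μ
      = ENNReal.ofReal (∑' n : ℕ,
          (a / (a + b + n)) *
          (∏ j ∈ Finset.Ico 1 d, ((b + n + j) / (a + b + n + j))) *
          (a / (a + b + n + d))))
    ∧ Summable (fun n : ℕ =>
        (a / (a + b + n)) *
        (∏ j ∈ Finset.Ico 1 d, ((b + n + j) / (a + b + n + j))) *
        (a / (a + b + n + d))) := by
  have hsum := summable_dStringWeight ha hb d
  refine ⟨?_, hsum⟩
  rw [lintegral_tsum fun n => by fun_prop,
    tsum_congr (lintegral_dString_eq_dStringWeight ha hb hmeas hval hindep hp hd)]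
  exact (ENNReal.ofReal_tsum_of_nonneg (dStringWeight_nonneg ha.le hb d) hsum).symm
end

section
/- Let A_n = {0 < x_0 < x_1 < ··· < x_n < 1} ⊂ ℝ^{n+1}, let a,b>0, and let k_0,...,k_n be positive integers with partial sums K_0=k_0, K_s = K_{s-1}+k_s. Then ∫_{A_n} x_0^{b+k_0-2} ∏_{i=1}^n x_i^{k_i-1} (1-x_n)^a dx_0···dx_n = B(b+K_n-1, a+1) / ∏_{s=0}^{n-1}(b+K_s-1), where B denotes the Beta function. -/
/-!
Integrating out the smallest coordinate first, `∫_0^{x_1} x_0^{b+k_0-2} dx_0 =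
x_1^{b+k_0-1} / (b+k_0-1)` turns the integral over `A_{n+1}` into one over `A_n` of the same
shape, with `b` replaced by `b + k_0` and `k` shifted by one. After `n` steps only the Beta
integral `∫_0^1 x^{b+K_n-2} (1-x)^a dx` remains. Working with `ℝ≥0∞`-valued integrals makes
Tonelli applicable without any integrability bookkeeping.
-/

open Finset MeasureTheory

/-- Partial sums `K_s = k_0 + k_1 + ⋯ + k_s`. -/
def partialSum (k : ℕ → ℕ) (s : ℕ) : ℕ := ∑ i ∈ Finset.range (s + 1), k i

open scoped ENNReal
open ProbabilityTheory

def orderSimplex (n : ℕ) : Set (Fin (n + 1) → ℝ) :=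
  {x | StrictMono x ∧ 0 < x 0 ∧ x (Fin.last n) < 1}

lemma measurableSet_orderSimplex (n : ℕ) : MeasurableSet (orderSimplex n) := by
  have : orderSimplex n = (⋂ i : Fin n, {x | x i.castSucc < x i.succ}) ∩ {x | 0 < x 0} ∩
      {x | x (Fin.last n) < 1} := by
    ext x
    simp [orderSimplex, Fin.strictMono_iff_lt_succ, and_assoc]
  rw [this]
  refine .inter (.inter (.iInter fun i => measurableSet_lt ?_ ?_) (measurableSet_lt ?_ ?_))
    (measurableSet_lt ?_ ?_) <;> fun_prop

lemma cons_mem_orderSimplex_iff {n : ℕ} {t : ℝ} {y : Fin (n + 1) → ℝ} :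
    (Fin.cons t y : Fin (n + 2) → ℝ) ∈ orderSimplex (n + 1) ↔
      y ∈ orderSimplex n ∧ t ∈ Set.Ioo 0 (y 0) := by
  simp only [orderSimplex, Set.mem_ofPred_eq, Set.mem_Ioo, Fin.strictMono_iff_lt_succ,
    Fin.forall_fin_succ, Fin.cons_zero, Fin.cons_succ, ← Fin.succ_last, Fin.castSucc_zero,
    Fin.castSucc_succ]
  constructor
  · rintro ⟨⟨h0, hy⟩, ht, hlast⟩
    exact ⟨⟨hy, ht.trans h0, hlast⟩, ht, h0⟩
  · rintro ⟨⟨hy, -, hlast⟩, ht, h0⟩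
    exact ⟨⟨h0, hy⟩, ht, hlast⟩

lemma indicator_orderSimplex_cons {n : ℕ} {g : (Fin (n + 2) → ℝ) → ℝ≥0∞} (t : ℝ)
    (y : Fin (n + 1) → ℝ) :
    (orderSimplex (n + 1)).indicator g (Fin.cons t y) = (orderSimplex n).indicator
      (fun y => (Set.Ioo 0 (y 0)).indicator (fun t => g (Fin.cons t y)) t) y := by
  classical
  simp only [Set.indicator_apply, cons_mem_orderSimplex_iff]
  split_ifs <;> tauto

lemma lintegral_orderSimplex_zero (g : (Fin 1 → ℝ) → ℝ≥0∞) :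
    ∫⁻ x in orderSimplex 0, g x = ∫⁻ t in Set.Ioo 0 1, g (fun _ => t) := by
  have hpre : (MeasurableEquiv.funUnique (Fin 1) ℝ).symm ⁻¹' orderSimplex 0 = Set.Ioo 0 1 := by
    ext t
    simp [orderSimplex, Subsingleton.strictMono]
  refine (((volume_preserving_funUnique (Fin 1) ℝ).symm _).setLIntegral_comp_preimage_emb
    (MeasurableEquiv.measurableEmbedding _) g _).symm.trans ?_
  rw [hpre]
  rfl

lemma lintegral_orderSimplex_succ {n : ℕ} {g : (Fin (n + 2) → ℝ) → ℝ≥0∞} (hg : Measurable g) :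
    ∫⁻ x in orderSimplex (n + 1), g x =
      ∫⁻ y in orderSimplex n, ∫⁻ t in Set.Ioo 0 (y 0), g (Fin.cons t y) := by
  have hcons := (volume_preserving_piFinSuccAbove (fun _ : Fin (n + 2) => ℝ) 0).symm
  have hg' : Measurable ((orderSimplex (n + 1)).indicator g) :=
    hg.indicator (measurableSet_orderSimplex _)
  rw [← lintegral_indicator (measurableSet_orderSimplex _),
    ← lintegral_indicator (measurableSet_orderSimplex _),
    ← hcons.lintegral_comp_emb (MeasurableEquiv.measurableEmbedding _), Measure.volume_eq_prod,
    lintegral_prod_symm]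
  swap
  · exact (hg'.comp (MeasurableEquiv.measurable _)).aemeasurable
  refine lintegral_congr fun y => ?_
  simp only [MeasurableEquiv.piFinSuccAbove_symm_apply, Fin.insertNthEquiv, Equiv.coe_fn_mk,
    Fin.insertNth_zero', indicator_orderSimplex_cons]
  by_cases hy : y ∈ orderSimplex n
  · simp only [Set.indicator_of_mem hy, lintegral_indicator measurableSet_Ioo]
  · simp only [Set.indicator_of_notMem hy, lintegral_zero]

lemma lintegral_rpow_Ioo {c y : ℝ} (hc : -1 < c) (hy : 0 ≤ y) :
    ∫⁻ t in Set.Ioo 0 y, ENNReal.ofReal (t ^ c) = ENNReal.ofReal (y ^ (c + 1) / (c + 1)) := by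
  rw [← ofReal_integral_eq_lintegral_ofReal, ← integral_Ioc_eq_integral_Ioo,
    ← intervalIntegral.integral_of_le hy, integral_rpow (Or.inl hc),
    Real.zero_rpow (by linarith), sub_zero]
  · exact ((intervalIntegral.intervalIntegrable_rpow' hc).1).mono_set Set.Ioo_subset_Ioc_self
  · exact (ae_restrict_iff' measurableSet_Ioo).2 (.of_forall fun t ht => Real.rpow_nonneg ht.1.le _)

lemma lintegral_rpow_mul_one_sub_rpow {p q : ℝ} (hp : -1 < p) (hq : -1 < q) :
    ∫⁻ t in Set.Ioo 0 1, ENNReal.ofReal (t ^ p * (1 - t) ^ q) =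
      ENNReal.ofReal (beta (p + 1) (q + 1)) := by
  have hα : 0 < p + 1 := by linarith
  have hβ : 0 < q + 1 := by linarith
  have h := lintegral_betaPDF_eq_one hα hβ
  simp_rw [lintegral_betaPDF, add_sub_cancel_right, mul_assoc,
    ENNReal.ofReal_mul (one_div_pos.2 (beta_pos hα hβ)).le] at h
  rw [lintegral_const_mul' _ _ ENNReal.ofReal_ne_top, mul_comm] at h
  rw [ENNReal.eq_inv_of_mul_eq_one_left h, one_div, ENNReal.ofReal_inv_of_pos (beta_pos hα hβ),
    inv_inv]

/-- `k 0` does not enter: the exponent of `x 0` is the free parameter `c` (the theorem's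
`b + k 0 - 2`), because integrating out `x 0` shifts it by `k 1`. -/
noncomputable def simplexIntegrand {n : ℕ} (c a : ℝ) (k : ℕ → ℕ) (x : Fin (n + 1) → ℝ) : ℝ :=
  x 0 ^ c * (∏ i ∈ univ.filter (fun i : Fin (n + 1) => i ≠ 0), x i ^ (k i.val - 1)) *
    (1 - x (Fin.last n)) ^ a

lemma measurable_simplexIntegrand (n : ℕ) (c a : ℝ) (k : ℕ → ℕ) :
    Measurable (simplexIntegrand (n := n) c a k) := by
  unfold simplexIntegrand
  fun_prop

lemma simplexIntegrand_nonneg {n : ℕ} (c a : ℝ) (k : ℕ → ℕ) {x : Fin (n + 1) → ℝ}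
    (hx : x ∈ orderSimplex n) : 0 ≤ simplexIntegrand c a k x := by
  obtain ⟨hmono, h0, hlast⟩ := hx
  have hpos : ∀ i, 0 ≤ x i := fun i => h0.le.trans (hmono.monotone (Fin.zero_le i))
  unfold simplexIntegrand
  have := Real.rpow_nonneg (hpos 0) c
  have := Real.rpow_nonneg (sub_nonneg.2 hlast.le) a
  have := prod_nonneg fun i (_ : i ∈ univ.filter (fun i : Fin (n + 1) => i ≠ 0)) =>
    pow_nonneg (hpos i) (k i.val - 1)
  positivity

lemma simplexIntegrand_const (c a : ℝ) (k : ℕ → ℕ) (t : ℝ) :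
    simplexIntegrand c a k (fun _ : Fin 1 => t) = t ^ c * (1 - t) ^ a := by
  simp only [simplexIntegrand, prod_filter]
  simp

lemma simplexIntegrand_eq_rpow_mul {n : ℕ} (c a : ℝ) (k : ℕ → ℕ) (x : Fin (n + 1) → ℝ) :
    simplexIntegrand c a k x = x 0 ^ c * simplexIntegrand 0 a k x := by
  simp only [simplexIntegrand, Real.rpow_zero, one_mul, mul_assoc]

lemma simplexIntegrand_cons {n : ℕ} (c a : ℝ) (k : ℕ → ℕ) (t : ℝ) (y : Fin (n + 1) → ℝ) :
    simplexIntegrand c a k (Fin.cons t y : Fin (n + 2) → ℝ) =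
      t ^ c * (y 0 ^ (k 1 - 1) * simplexIntegrand 0 a (fun i => k (i + 1)) y) := by
  simp only [simplexIntegrand, prod_filter, Fin.prod_univ_succ, ← Fin.succ_last]
  simp [mul_assoc]

lemma lintegral_simplexIntegrand_cons {n : ℕ} {c : ℝ} (a : ℝ) {k : ℕ → ℕ} (hc : -1 < c)
    (hk : 1 ≤ k 1) {y : Fin (n + 1) → ℝ} (hy : 0 < y 0) :
    ∫⁻ t in Set.Ioo 0 (y 0), ENNReal.ofReal (simplexIntegrand c a k (Fin.cons t y)) =
      ENNReal.ofReal ((c + 1)⁻¹ * simplexIntegrand (c + k 1) a (fun i => k (i + 1)) y) := by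
  set D := y 0 ^ (k 1 - 1) * simplexIntegrand 0 a (fun i => k (i + 1)) y with hD
  have hsplit : ∀ t ∈ Set.Ioo 0 (y 0), ENNReal.ofReal (simplexIntegrand c a k (Fin.cons t y)) =
      ENNReal.ofReal (t ^ c) * ENNReal.ofReal D := fun t ht => by
    rw [simplexIntegrand_cons, ENNReal.ofReal_mul (Real.rpow_nonneg ht.1.le c)]
  have hexp : y 0 ^ (c + 1) * y 0 ^ (k 1 - 1) = y 0 ^ (c + k 1) := by
    rw [← Real.rpow_natCast, ← Real.rpow_add hy, Nat.cast_sub hk, Nat.cast_one]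
    congr 1
    ring
  rw [setLIntegral_congr_fun measurableSet_Ioo hsplit,
    lintegral_mul_const _ (by fun_prop), lintegral_rpow_Ioo hc hy.le,
    ← ENNReal.ofReal_mul (div_nonneg (Real.rpow_nonneg hy.le _) (by linarith)),
    simplexIntegrand_eq_rpow_mul (c + k 1), ← hexp, hD]
  congr 1
  ring

lemma partialSum_succ (k : ℕ → ℕ) (s : ℕ) :
    partialSum k (s + 1) = k 0 + partialSum (fun i => k (i + 1)) s := by
  rw [partialSum, sum_range_succ', add_comm]
  rfl

lemma partialSum_zero (k : ℕ → ℕ) : partialSum k 0 = k 0 := by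
  simp [partialSum]

lemma one_le_partialSum {k : ℕ → ℕ} (hk : ∀ i, 1 ≤ k i) (s : ℕ) : 1 ≤ partialSum k s :=
  (hk 0).trans (single_le_sum (fun i _ => Nat.zero_le (k i)) (mem_range.2 s.succ_pos))

lemma lintegral_simplexIntegrand (n : ℕ) {a : ℝ} (ha : -1 < a) {b : ℝ} (hb : 0 < b)
    {k : ℕ → ℕ} (hk : ∀ i, 1 ≤ k i) :
    ∫⁻ x in orderSimplex n, ENNReal.ofReal (simplexIntegrand (b + k 0 - 2) a k x) =
      ENNReal.ofReal (beta (b + partialSum k n - 1) (a + 1) /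
        ∏ s ∈ range n, (b + partialSum k s - 1)) := by
  induction n generalizing b k with
  | zero =>
    have hk0 : (1 : ℝ) ≤ k 0 := by exact_mod_cast hk 0
    rw [lintegral_orderSimplex_zero]
    simp_rw [simplexIntegrand_const]
    rw [lintegral_rpow_mul_one_sub_rpow (by linarith) ha, partialSum_zero, range_zero,
      prod_empty, div_one]
    congr 2
    ring
  | succ n ih =>
    have hk0 : (1 : ℝ) ≤ k 0 := by exact_mod_cast hk 0
    have hc : -1 < b + k 0 - 2 := by linarith
    rw [lintegral_orderSimplex_succ (measurable_simplexIntegrand _ _ _ _).ennreal_ofReal,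
      setLIntegral_congr_fun (measurableSet_orderSimplex n) fun y hy =>
        lintegral_simplexIntegrand_cons a hc (hk 1) hy.2.1]
    have hinv : 0 ≤ (b + k 0 - 2 + 1)⁻¹ := inv_nonneg.2 (by linarith)
    simp_rw [ENNReal.ofReal_mul hinv]
    rw [lintegral_const_mul' _ _ ENNReal.ofReal_ne_top,
      show b + (k 0 : ℝ) - 2 + k 1 = b + k 0 + k (0 + 1) - 2 by ring,
      ih (b := b + k 0) (k := fun i => k (i + 1)) (by linarith) (fun i => hk _),
      ← ENNReal.ofReal_mul hinv]
    congr 1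
    simp only [partialSum_succ, partialSum_zero, prod_range_succ', Nat.cast_add, ← add_assoc]
    rw [div_mul_eq_div_div, div_eq_inv_mul _ (b + k 0 - 1)]
    congr 2
    ring

/-- Let `A_n = {0 < x_0 < x_1 < ⋯ < x_n < 1} ⊆ ℝ^{n+1}`, `a, b > 0`, and `k_0, …, k_n`
positive integers with partial sums `K_s`.  Then
`∫_{A_n} x_0^{b+k_0-2} ∏_{i=1}^n x_i^{k_i-1} (1-x_n)^a dx = B(b+K_n-1, a+1) / ∏_{s=0}^{n-1} (b+K_s-1)`,
where `B(α,β) = Γ(α)Γ(β)/Γ(α+β)` is the Beta function. -/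
theorem stmt2 (n : ℕ) (a b : ℝ) (ha : 0 < a) (hb : 0 < b)
    (k : ℕ → ℕ) (hk : ∀ i, 1 ≤ k i) :
    ∫ x in {x : Fin (n + 1) → ℝ | StrictMono x ∧ 0 < x 0 ∧ x (Fin.last n) < 1},
        (x 0 ^ (b + (k 0 : ℝ) - 2)) *
        (∏ i ∈ Finset.univ.filter (fun i : Fin (n + 1) => i ≠ 0), x i ^ (k i.val - 1)) *
        ((1 - x (Fin.last n)) ^ a)
      = (Real.Gamma (b + (partialSum k n : ℝ) - 1) * Real.Gamma (a + 1) /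
          Real.Gamma ((b + (partialSum k n : ℝ) - 1) + (a + 1))) /
        ∏ s ∈ Finset.range n, (b + (partialSum k s : ℝ) - 1) := by
  have hK : ∀ s, 0 < b + (partialSum k s : ℝ) - 1 := fun s => by
    have : (1 : ℝ) ≤ partialSum k s := by exact_mod_cast one_le_partialSum hk s
    linarith
  change ∫ x in orderSimplex n, simplexIntegrand (b + k 0 - 2) a k x =
    beta (b + partialSum k n - 1) (a + 1) / ∏ s ∈ range n, (b + (partialSum k s : ℝ) - 1)
  rw [integral_eq_lintegral_of_nonneg_ae
      (ae_restrict_of_forall_mem (measurableSet_orderSimplex n) fun x hx =>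
        simplexIntegrand_nonneg _ _ _ hx)
      (measurable_simplexIntegrand _ _ _ _).aestronglyMeasurable,
    lintegral_simplexIntegrand n (by linarith) hb hk, ENNReal.toReal_ofReal]
  exact div_nonneg (beta_pos (hK n) (by linarith)).le (prod_nonneg fun s _ => (hK s).le)
end

section
/- Let Z_1 be the count of 1-strings in Bern_1(a,b) with a>0, b≥0. Then E[Z_1] = a(a+1)/(a+b), E[Z_1²] = a(a+1)/(a+b) + a²(a+1)(a+2)/[(a+b)(a+b+1)], and consequently Var(Z_1) − E[Z_1] = a²(a+1)(b−1)/[(a+b)²(a+b+1)]. -/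
/-!
Write `p i = P(Y i = 1)`, `c = a + b` and `W m = Y (m+1) Y (m+2)`. Since the `Y i` are independent
and `{0,1}`-valued, `E[∏_{i ∈ s} Y i] = ∏_{i ∈ s} p i`, and `W m W n` is the product of the `Y i`
over the union of the two index sets. Expanding `Z² = ∑ W m ^ 2 + 2 ∑_{m < n} W m W n` reduces both
moments to series in `p (j + 2) = a / (c + j)`, which telescope:
`∑_k p (n+k) p (n+k+1) = a p n` for `n ≥ 2`, and `∑_k p (k+2) p (k+3) p (k+4) = a³ / (2c(c+1))`.
-/

open Finset MeasureTheory ProbabilityTheory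
open scoped ENNReal
open Filter Topology

lemma hasSum_sub_succ_of_antitone_s9 {g : ℕ → ℝ} (hg : Antitone g)
    (hlim : Tendsto g atTop (𝓝 0)) : HasSum (fun k ↦ g k - g (k + 1)) (g 0) := by
  rw [hasSum_iff_tendsto_nat_of_nonneg fun k ↦ sub_nonneg.2 (hg k.le_succ)]
  simp_rw [Finset.sum_range_sub']
  simpa using tendsto_const_nhds.sub hlim

lemma hasSum_inv_mul_add_one {x : ℝ} (hx : 0 < x) :
    HasSum (fun k : ℕ ↦ ((x + k) * (x + k + 1))⁻¹) x⁻¹ := by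
  have hg : Antitone fun k : ℕ ↦ (x + k)⁻¹ := fun i j hij ↦
    inv_anti₀ (by positivity) (by gcongr)
  have hlim : Tendsto (fun k : ℕ ↦ (x + k)⁻¹) atTop (𝓝 0) :=
    (tendsto_atTop_add_const_left _ x tendsto_natCast_atTop_atTop).inv_tendsto_atTop
  convert hasSum_sub_succ_of_antitone_s9 hg hlim using 1
  · ext k
    have : 0 < x + k := by positivity
    push_cast
    field_simp
    ring
  · simp

lemma hasSum_inv_mul_add_one_mul_add_two {x : ℝ} (hx : 0 < x) :
    HasSum (fun k : ℕ ↦ ((x + k) * (x + k + 1) * (x + k + 2))⁻¹) (2 * x * (x + 1))⁻¹ := by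
  have hg : Antitone fun k : ℕ ↦ (2 * (x + k) * (x + k + 1))⁻¹ := fun i j hij ↦
    inv_anti₀ (by positivity) (by gcongr)
  have hlim : Tendsto (fun k : ℕ ↦ (2 * (x + k) * (x + k + 1))⁻¹) atTop (𝓝 0) := by
    have h := tendsto_atTop_add_const_left _ x tendsto_natCast_atTop_atTop
    exact ((h.const_mul_atTop two_pos).atTop_mul_atTop₀
      (tendsto_atTop_add_const_right _ 1 h)).inv_tendsto_atTop
  convert hasSum_sub_succ_of_antitone_s9 hg hlim using 1
  · ext k
    have : 0 < x + k := by positivity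
    push_cast
    field_simp
    ring
  · simp

lemma ENNReal.tsum_ofReal_of_hasSum {f : ℕ → ℝ} {s : ℝ} (h : HasSum f s) (hf : ∀ n, 0 ≤ f n) :
    ∑' n, ENNReal.ofReal (f n) = ENNReal.ofReal s := by
  rw [← ENNReal.ofReal_tsum_of_nonneg hf h.summable, h.tsum_eq]

section HarmonicProbabilities

variable {a c : ℝ} {q : ℕ → ℝ≥0∞}

lemma tsum_mul_succ_of_eq_ofReal_div (ha : 0 ≤ a) (hc : 0 < c)
    (hq : ∀ j : ℕ, q (j + 2) = ENNReal.ofReal (a / (c + j))) (n : ℕ) :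
    ∑' k, q (k + n + 2) * q (k + n + 3) = ENNReal.ofReal a * q (n + 2) := by
  have hx : 0 < c + n := by positivity
  have hterm (k : ℕ) : q (k + n + 2) * q (k + n + 3)
      = ENNReal.ofReal (a ^ 2 * ((c + n + k) * (c + n + k + 1))⁻¹) := by
    rw [hq, hq (k + n + 1), ← ENNReal.ofReal_mul (by positivity)]
    congr 1
    push_cast
    field_simp
    ring
  rw [tsum_congr hterm, ENNReal.tsum_ofReal_of_hasSum
    ((hasSum_inv_mul_add_one hx).mul_left _) fun k ↦ by positivity,
    hq, ← ENNReal.ofReal_mul ha]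
  congr 1
  field_simp

lemma tsum_mul_succ_mul_succ_of_eq_ofReal_div (ha : 0 ≤ a) (hc : 0 < c)
    (hq : ∀ j : ℕ, q (j + 2) = ENNReal.ofReal (a / (c + j))) :
    ∑' k, q (k + 2) * q (k + 3) * q (k + 4) = ENNReal.ofReal (a ^ 3 / (2 * c * (c + 1))) := by
  have hterm (k : ℕ) : q (k + 2) * q (k + 3) * q (k + 4)
      = ENNReal.ofReal (a ^ 3 * ((c + k) * (c + k + 1) * (c + k + 2))⁻¹) := by
    rw [hq, hq (k + 1), hq (k + 2), ← ENNReal.ofReal_mul (by positivity),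
      ← ENNReal.ofReal_mul (by positivity)]
    congr 1
    push_cast
    field_simp
    ring
  rw [tsum_congr hterm, ENNReal.tsum_ofReal_of_hasSum
    ((hasSum_inv_mul_add_one_mul_add_two hc).mul_left _) fun k ↦ by positivity, div_eq_mul_inv]

lemma tsum_mul_of_eq_ofReal_div (ha : 0 ≤ a) (hc : 0 < c)
    (hq : ∀ j : ℕ, q (j + 2) = ENNReal.ofReal (a / (c + j))) (hq1 : q 1 = 1) :
    ∑' n, q (n + 1) * q (n + 2) = ENNReal.ofReal (a * (a + 1) / c) := by
  have htail := tsum_mul_succ_of_eq_ofReal_div ha hc hq 0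
  have hq2 := hq 0
  simp only [add_zero, zero_add, CharP.cast_eq_zero] at htail hq2
  rw [tsum_eq_zero_add' ENNReal.summable]
  simp only [zero_add, hq1, one_mul, htail, hq2]
  rw [← ENNReal.ofReal_mul ha, ← ENNReal.ofReal_add (by positivity) (by positivity)]
  congr 1
  field_simp
  ring

lemma tsum_mul_mul_of_eq_ofReal_div (ha : 0 ≤ a) (hc : 0 < c)
    (hq : ∀ j : ℕ, q (j + 2) = ENNReal.ofReal (a / (c + j))) (hq1 : q 1 = 1) :
    ∑' n, q (n + 1) * q (n + 2) * q (n + 3)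
      = ENNReal.ofReal (a ^ 2 * (a + 2) / (2 * c * (c + 1))) := by
  rw [tsum_eq_zero_add' ENNReal.summable]
  simp only [zero_add, hq1, one_mul, tsum_mul_succ_mul_succ_of_eq_ofReal_div ha hc hq]
  rw [hq 0, hq 1, ← ENNReal.ofReal_mul (by positivity),
    ← ENNReal.ofReal_add (by positivity) (by positivity)]
  congr 1
  push_cast
  field_simp
  ring

lemma tsum_pairs_add_two_mul_tsum_eq (ha : 0 ≤ a) (hc : 0 < c)
    (hq : ∀ j : ℕ, q (j + 2) = ENNReal.ofReal (a / (c + j))) (hq1 : q 1 = 1) :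
    ∑' n, q (n + 1) * q (n + 2)
        + 2 * ∑' m, q (m + 1) * q (m + 2) * (q (m + 3) + ∑' k, q (k + m + 3) * q (k + m + 4))
      = ENNReal.ofReal (a * (a + 1) / c + a ^ 2 * (a + 1) * (a + 2) / (c * (c + 1))) := by
  have htail (m : ℕ) : ∑' k, q (k + m + 3) * q (k + m + 4) = ENNReal.ofReal a * q (m + 3) :=
    tsum_mul_succ_of_eq_ofReal_div ha hc hq (m + 1)
  have hfactor (x y z : ℝ≥0∞) :
      x * y * (z + ENNReal.ofReal a * z) = ENNReal.ofReal (1 + a) * (x * y * z) := by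
    rw [ENNReal.ofReal_add zero_le_one ha, ENNReal.ofReal_one]
    ring
  simp only [htail, hfactor, ENNReal.tsum_mul_left, tsum_mul_of_eq_ofReal_div ha hc hq hq1,
    tsum_mul_mul_of_eq_ofReal_div ha hc hq hq1]
  rw [← ENNReal.ofReal_mul (by positivity), ← ENNReal.ofReal_ofNat 2,
    ← ENNReal.ofReal_mul zero_le_two, ← ENNReal.ofReal_add (by positivity) (by positivity)]
  congr 1
  field_simp
  ring

end HarmonicProbabilities

lemma ENNReal.tsum_ite_lt_eq_tsum_add (g : ℕ → ℝ≥0∞) (n : ℕ) :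
    ∑' m, (if n < m then g m else 0) = ∑' k, g (n + 1 + k) := by
  rw [← ENNReal.summable.sum_add_tsum_nat_add' (k := n + 1),
    sum_eq_zero fun m hm ↦ if_neg (by simp at hm; omega), zero_add]
  exact tsum_congr fun k ↦ by rw [if_pos (by omega), add_comm k]

lemma ENNReal.tsum_tsum_eq_tsum_add_two_mul_of_symm (f : ℕ → ℕ → ℝ≥0∞)
    (hf : ∀ m n, f m n = f n m) :
    ∑' m, ∑' n, f m n = ∑' m, f m m + 2 * ∑' m, ∑' k, f m (m + 1 + k) := by
  have hsplit (m : ℕ) : ∑' n, f m n =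
      ∑' n, (if n < m then f m n else 0) + (f m m + ∑' k, f m (m + 1 + k)) := by
    rw [← ENNReal.summable.sum_add_tsum_nat_add' (k := m),
      tsum_eq_sum (s := range m) fun n hn ↦ if_neg (by simpa using hn),
      tsum_eq_zero_add' ENNReal.summable]
    congr 1
    · exact sum_congr rfl fun n hn ↦ (if_pos (mem_range.1 hn)).symm
    · simp only [add_right_comm _ 1 m, add_comm _ m, add_right_comm m, add_zero]
  have hlower : ∑' m, ∑' n, (if n < m then f m n else 0) = ∑' n, ∑' k, f n (n + 1 + k) := by
    rw [ENNReal.tsum_comm]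
    exact tsum_congr fun n ↦ by
      simp_rw [hf _ n]
      exact ENNReal.tsum_ite_lt_eq_tsum_add (f n) n
  simp_rw [hsplit, ENNReal.tsum_add, hlower]
  ring

section Indicators

variable {Ω ι : Type*} [MeasurableSpace Ω] {μ : Measure Ω}

lemma prod_natCast_eq_ite {Y : ι → ℕ} (hY : ∀ i, Y i ≤ 1) (s : Finset ι) :
    ∏ i ∈ s, (Y i : ℝ≥0∞) = if ∀ i ∈ s, Y i = 1 then 1 else 0 := by
  rw [← prod_boole]
  refine prod_congr rfl fun i _ ↦ ?_
  rcases Nat.le_one_iff_eq_zero_or_eq_one.1 (hY i) with h | h <;> simp [h]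

lemma prod_natCast_mul_prod_natCast [DecidableEq ι] {Y : ι → ℕ} (hY : ∀ i, Y i ≤ 1)
    (s t : Finset ι) :
    (∏ i ∈ s, (Y i : ℝ≥0∞)) * ∏ i ∈ t, (Y i : ℝ≥0∞) = ∏ i ∈ s ∪ t, (Y i : ℝ≥0∞) := by
  simp only [prod_natCast_eq_ite hY, ite_zero_mul_ite_zero, one_mul, forall_mem_union]

lemma lintegral_prod_natCast {Y : ι → Ω → ℕ} (hmeas : ∀ i, Measurable (Y i))
    (hval : ∀ i ω, Y i ω ≤ 1) (hindep : iIndepFun Y μ) (s : Finset ι) :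
    ∫⁻ ω, ∏ i ∈ s, (Y i ω : ℝ≥0∞) ∂μ = ∏ i ∈ s, μ {ω | Y i ω = 1} := by
  have hind : (fun ω ↦ ∏ i ∈ s, (Y i ω : ℝ≥0∞)) = (⋂ i ∈ s, Y i ⁻¹' {1}).indicator 1 := by
    ext ω
    simp [prod_natCast_eq_ite fun i ↦ hval i ω, Set.indicator]
  rw [hind, lintegral_indicator_one (s.measurableSet_biInter fun i _ ↦ hmeas i (.singleton 1)),
    hindep.measure_inter_preimage_eq_mul s fun _ _ ↦ .singleton 1]
  rfl

end Indicators

section StringCount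

variable {Ω : Type*} {Y : ℕ → Ω → ℕ}

lemma natCast_mul_eq_prod_pair (n : ℕ) (ω : Ω) :
    ((Y (n + 1) ω * Y (n + 2) ω : ℕ) : ℝ≥0∞) = ∏ i ∈ {n + 1, n + 2}, (Y i ω : ℝ≥0∞) := by
  rw [prod_pair (by omega), Nat.cast_mul]

variable [MeasurableSpace Ω] {μ : Measure Ω}

lemma measurable_natCast_mul (hmeas : ∀ i, Measurable (Y i)) (n : ℕ) :
    Measurable fun ω ↦ ((Y (n + 1) ω * Y (n + 2) ω : ℕ) : ℝ≥0∞) :=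
  measurable_from_nat.comp ((hmeas _).mul (hmeas _))

lemma lintegral_string_mul_string (hmeas : ∀ i, Measurable (Y i)) (hval : ∀ i ω, Y i ω ≤ 1)
    (hindep : iIndepFun Y μ) (m n : ℕ) :
    ∫⁻ ω, ((Y (m + 1) ω * Y (m + 2) ω : ℕ) : ℝ≥0∞) * ((Y (n + 1) ω * Y (n + 2) ω : ℕ) : ℝ≥0∞) ∂μ
      = ∏ i ∈ {m + 1, m + 2} ∪ {n + 1, n + 2}, μ {ω | Y i ω = 1} := by
  simp_rw [natCast_mul_eq_prod_pair, prod_natCast_mul_prod_natCast fun i ↦ hval i _]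
  exact lintegral_prod_natCast hmeas hval hindep _

lemma lintegral_tsum_strings (hmeas : ∀ i, Measurable (Y i)) (hval : ∀ i ω, Y i ω ≤ 1)
    (hindep : iIndepFun Y μ) :
    ∫⁻ ω, ∑' n, ((Y (n + 1) ω * Y (n + 2) ω : ℕ) : ℝ≥0∞) ∂μ
      = ∑' n, μ {ω | Y (n + 1) ω = 1} * μ {ω | Y (n + 2) ω = 1} := by
  rw [lintegral_tsum fun n ↦ (measurable_natCast_mul hmeas n).aemeasurable]
  refine tsum_congr fun n ↦ ?_
  simp_rw [natCast_mul_eq_prod_pair]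
  rw [lintegral_prod_natCast hmeas hval hindep, prod_pair (by omega)]

lemma lintegral_sq_tsum_strings (hmeas : ∀ i, Measurable (Y i)) (hval : ∀ i ω, Y i ω ≤ 1)
    (hindep : iIndepFun Y μ) :
    ∫⁻ ω, (∑' n, ((Y (n + 1) ω * Y (n + 2) ω : ℕ) : ℝ≥0∞)) ^ 2 ∂μ
      = ∑' n, μ {ω | Y (n + 1) ω = 1} * μ {ω | Y (n + 2) ω = 1}
        + 2 * ∑' m, μ {ω | Y (m + 1) ω = 1} * μ {ω | Y (m + 2) ω = 1} *
          (μ {ω | Y (m + 3) ω = 1}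
            + ∑' k, μ {ω | Y (k + m + 3) ω = 1} * μ {ω | Y (k + m + 4) ω = 1}) := by
  set W : ℕ → Ω → ℝ≥0∞ := fun n ω ↦ ((Y (n + 1) ω * Y (n + 2) ω : ℕ) : ℝ≥0∞)
  set q : ℕ → ℝ≥0∞ := fun i ↦ μ {ω | Y i ω = 1}
  have hW := measurable_natCast_mul hmeas
  have hsq (ω : Ω) : (∑' n, W n ω) ^ 2 = ∑' m, ∑' n, W m ω * W n ω := by
    simp_rw [sq, ← ENNReal.tsum_mul_right, ← ENNReal.tsum_mul_left]
  have hmoment (m n : ℕ) : ∫⁻ ω, W m ω * W n ω ∂μ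
      = ∏ i ∈ {m + 1, m + 2} ∪ {n + 1, n + 2}, q i :=
    lintegral_string_mul_string hmeas hval hindep m n
  have hdiag (m : ℕ) : ∫⁻ ω, W m ω * W m ω ∂μ = q (m + 1) * q (m + 2) := by
    rw [hmoment, union_self, prod_pair (by omega)]
  have hnear (m : ℕ) : ∫⁻ ω, W m ω * W (m + 1) ω ∂μ = q (m + 1) * q (m + 2) * q (m + 3) := by
    rw [hmoment, show ({m + 1, m + 2} ∪ {m + 1 + 1, m + 1 + 2} : Finset ℕ)
      = {m + 1, m + 2, m + 3} by ext; simp only [mem_union, mem_insert, mem_singleton]; omega,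
      prod_insert (by simp), prod_pair (by omega), mul_assoc]
  have hfar (m k : ℕ) : ∫⁻ ω, W m ω * W (m + 1 + (k + 1)) ω ∂μ
      = q (m + 1) * q (m + 2) * (q (k + m + 3) * q (k + m + 4)) := by
    rw [hmoment, prod_union (by simp; omega), prod_pair (by omega), prod_pair (by omega)]
    congr 3 <;> omega
  calc ∫⁻ ω, (∑' n, W n ω) ^ 2 ∂μ = ∑' m, ∑' n, ∫⁻ ω, W m ω * W n ω ∂μ := by
        simp_rw [hsq]
        rw [lintegral_tsum (f := fun m ω ↦ ∑' n, W m ω * W n ω) fun m ↦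
          (Measurable.tsum fun n ↦ (hW m).mul (hW n)).aemeasurable]
        exact tsum_congr fun m ↦ lintegral_tsum fun n ↦ ((hW m).mul (hW n)).aemeasurable
    _ = _ := by
      rw [ENNReal.tsum_tsum_eq_tsum_add_two_mul_of_symm _ fun m n ↦ by simp_rw [mul_comm]]
      simp_rw [hdiag, fun m ↦ tsum_eq_zero_add' (f := fun k ↦ ∫⁻ ω, W m ω * W (m + 1 + k) ω ∂μ)
        ENNReal.summable, add_zero, hnear, hfar, ENNReal.tsum_mul_left, mul_add]
      rfl

end StringCount

theorem stmt9_general {Ω : Type*} [MeasurableSpace Ω] (μ : Measure Ω)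
    (a b : ℝ) (ha : 0 < a) (hb : 0 ≤ b)
    (Y : ℕ → Ω → ℕ) (hmeas : ∀ n, Measurable (Y n)) (hval : ∀ n ω, Y n ω ≤ 1)
    (hindep : iIndepFun Y μ)
    (hp1 : μ {ω | Y 1 ω = 1} = 1)
    (hp : ∀ n : ℕ, 2 ≤ n → μ {ω | Y n ω = 1} = ENNReal.ofReal (a / (a + b + n - 2))) :
    (∫⁻ ω, (∑' n : ℕ, ((Y (n + 1) ω * Y (n + 2) ω : ℕ) : ℝ≥0∞)) ∂μ
        = ENNReal.ofReal (a * (a + 1) / (a + b)))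
    ∧ (∫⁻ ω, (∑' n : ℕ, ((Y (n + 1) ω * Y (n + 2) ω : ℕ) : ℝ≥0∞)) ^ 2 ∂μ
        = ENNReal.ofReal (a * (a + 1) / (a + b)
            + a ^ 2 * (a + 1) * (a + 2) / ((a + b) * (a + b + 1))))
    ∧ ((a * (a + 1) / (a + b) + a ^ 2 * (a + 1) * (a + 2) / ((a + b) * (a + b + 1)))
          - (a * (a + 1) / (a + b)) ^ 2 - a * (a + 1) / (a + b)
        = a ^ 2 * (a + 1) * (b - 1) / ((a + b) ^ 2 * (a + b + 1))) := by
  have hc : 0 < a + b := by positivity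
  have hq (j : ℕ) : μ {ω | Y (j + 2) ω = 1} = ENNReal.ofReal (a / (a + b + j)) := by
    rw [hp (j + 2) (by omega)]
    push_cast
    ring_nf
  refine ⟨?_, ?_, by field_simp; ring⟩
  · rw [lintegral_tsum_strings hmeas hval hindep]
    exact tsum_mul_of_eq_ofReal_div (q := fun i ↦ μ {ω | Y i ω = 1}) ha.le hc hq hp1
  · rw [lintegral_sq_tsum_strings hmeas hval hindep]
    exact tsum_pairs_add_two_mul_tsum_eq (q := fun i ↦ μ {ω | Y i ω = 1}) ha.le hc hq hp1

/-- Let `Z_1 = ∑_{n ≥ 1} Y_n Y_{n+1}` be the count of 1-strings in `Bern₁(a,b)` with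
`a > 0`, `b ≥ 0` (the independent Bernoulli sequence with `P(Y_1 = 1) = 1` and
`P(Y_n = 1) = a/(a+b+n-2)` for `n ≥ 2`).  Then `E[Z_1] = a(a+1)/(a+b)`,
`E[Z_1²] = a(a+1)/(a+b) + a²(a+1)(a+2)/[(a+b)(a+b+1)]`, and consequently
`Var(Z_1) - E[Z_1] = a²(a+1)(b-1)/[(a+b)²(a+b+1)]`. -/
theorem stmt9 {Ω : Type*} [MeasurableSpace Ω] (μ : Measure Ω) [IsProbabilityMeasure μ]
    (a b : ℝ) (ha : 0 < a) (hb : 0 ≤ b)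
    (Y : ℕ → Ω → ℕ) (hmeas : ∀ n, Measurable (Y n)) (hval : ∀ n ω, Y n ω ≤ 1)
    (hindep : iIndepFun Y μ)
    (hp1 : μ {ω | Y 1 ω = 1} = 1)
    (hp : ∀ n : ℕ, 2 ≤ n → μ {ω | Y n ω = 1} = ENNReal.ofReal (a / (a + b + n - 2))) :
    (∫⁻ ω, (∑' n : ℕ, ((Y (n + 1) ω * Y (n + 2) ω : ℕ) : ℝ≥0∞)) ∂μ
        = ENNReal.ofReal (a * (a + 1) / (a + b)))
    ∧ (∫⁻ ω, (∑' n : ℕ, ((Y (n + 1) ω * Y (n + 2) ω : ℕ) : ℝ≥0∞)) ^ 2 ∂μ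
        = ENNReal.ofReal (a * (a + 1) / (a + b)
            + a ^ 2 * (a + 1) * (a + 2) / ((a + b) * (a + b + 1))))
    ∧ ((a * (a + 1) / (a + b) + a ^ 2 * (a + 1) * (a + 2) / ((a + b) * (a + b + 1)))
          - (a * (a + 1) / (a + b)) ^ 2 - a * (a + 1) / (a + b)
        = a ^ 2 * (a + 1) * (b - 1) / ((a + b) ^ 2 * (a + b + 1))) :=
  stmt9_general μ a b ha hb Y hmeas hval hindep hp1 hp
end

section
/- In Bern(a,b) with a>0, b>0: for each n≥2, the probability that the second 1 in Bern_1(a,b) occurs at time n equals p_n, where p_2 = a/(a+b) and p_n = [a/(a+b+n−2)]·∏_{r=0}^{n−3}(b+r)/(a+b+r) for n≥3, and Σ_{n≥2} p_n = 1. -/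
/-! The sequence `p_m` is the law of the first success in independent trials with success
probabilities `x_m = a / (a + b + m)`: the first `N` terms sum to `1 - ∏_{r<N} (1 - x_r)`,
and since `∑ x_r` diverges like the harmonic series, `∏ (1 - x_r) ≤ exp (-∑ x_r) → 0`. -/

open Finset Filter Topology

theorem Finset.sum_range_mul_prod_one_sub {R : Type*} [CommRing R] (x : ℕ → R) (N : ℕ) :
    ∑ m ∈ range N, x m * ∏ r ∈ range m, (1 - x r) = 1 - ∏ r ∈ range N, (1 - x r) := by
  induction N with
  | zero => simp
  | succ N ih => rw [sum_range_succ, prod_range_succ, ih]; ring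

theorem Real.prod_one_sub_le_exp_neg_sum {ι : Type*} (s : Finset ι) {x : ι → ℝ}
    (hx : ∀ i ∈ s, x i ≤ 1) : ∏ i ∈ s, (1 - x i) ≤ Real.exp (-∑ i ∈ s, x i) := by
  rw [← sum_neg_distrib, Real.exp_sum]
  exact prod_le_prod (fun i hi => sub_nonneg.2 (hx i hi)) fun i _ => Real.one_sub_le_exp_neg _

theorem tendsto_prod_range_one_sub_zero_of_not_summable {x : ℕ → ℝ} (hx0 : ∀ n, 0 ≤ x n)
    (hx1 : ∀ n, x n ≤ 1) (hx : ¬Summable x) :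
    Tendsto (fun N => ∏ r ∈ range N, (1 - x r)) atTop (𝓝 0) := by
  have hsum : Tendsto (fun N => ∑ r ∈ range N, x r) atTop atTop :=
    (not_summable_iff_tendsto_nat_atTop_of_nonneg hx0).1 hx
  exact squeeze_zero (fun N => prod_nonneg fun r _ => sub_nonneg.2 (hx1 r))
    (fun N => Real.prod_one_sub_le_exp_neg_sum _ fun r _ => hx1 r)
    (Real.tendsto_exp_neg_atTop_nhds_zero.comp hsum)

theorem hasSum_mul_prod_range_one_sub_of_not_summable {x : ℕ → ℝ} (hx0 : ∀ n, 0 ≤ x n)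
    (hx1 : ∀ n, x n ≤ 1) (hx : ¬Summable x) :
    HasSum (fun m => x m * ∏ r ∈ range m, (1 - x r)) 1 := by
  rw [hasSum_iff_tendsto_nat_of_nonneg
    fun m => mul_nonneg (hx0 m) (prod_nonneg fun r _ => sub_nonneg.2 (hx1 r))]
  simp only [sum_range_mul_prod_one_sub]
  simpa using (tendsto_prod_range_one_sub_zero_of_not_summable hx0 hx1 hx).const_sub 1

theorem not_summable_div_add_natCast {a c : ℝ} (ha : a ≠ 0) (hc : 0 < c) :
    ¬Summable fun n : ℕ => a / (c + n) := by
  intro hs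
  refine (Real.summable_one_div_nat_add_rpow c 1).not.2 (lt_irrefl 1) ?_
  refine (summable_mul_left_iff ha).1 (hs.congr fun n => ?_)
  rw [Real.rpow_one, abs_of_pos (by positivity), add_comm, mul_one_div]

theorem prod_Icc_two_pred_eq_prod_range {M : Type*} [CommMonoid M] (f : ℕ → M) (n : ℕ) :
    ∏ t ∈ Icc 2 (n - 1), f t = ∏ r ∈ range (n - 2), f (r + 2) := by
  rcases lt_or_ge n 2 with hn | hn
  · rw [Icc_eq_empty (by omega), Nat.sub_eq_zero_of_le hn.le, prod_empty, prod_range_zero]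
  · rw [← Ico_add_one_right_eq_Icc, Nat.sub_add_cancel (by omega), prod_Ico_eq_prod_range]
    simp only [add_comm 2]

/-- In `Bern₁(a,b)` with `a > 0`, `b > 0` (the independent Bernoulli sequence with
`P(Y_1=1) = 1` and `P(Y_n=1) = a/(a+b+n-2)` for `n ≥ 2`): for each `n ≥ 2`, the
probability that the second 1 occurs at time `n`, i.e.
`P(Y_2 = ⋯ = Y_{n-1} = 0, Y_n = 1) = ∏_{t=2}^{n-1} (b+t-2)/(a+b+t-2) · a/(a+b+n-2)`,
equals `p_n`, where `p_2 = a/(a+b)` and `p_n = [a/(a+b+n-2)] ∏_{r=0}^{n-3} (b+r)/(a+b+r)`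
for `n ≥ 3`; and `∑_{n ≥ 2} p_n = 1` (below the sum is reindexed by `m = n - 2`). -/
theorem stmt13 (a b : ℝ) (ha : 0 < a) (hb : 0 < b) :
    (∀ n : ℕ, 2 ≤ n →
      (∏ t ∈ Finset.Icc 2 (n - 1), ((b + (t : ℝ) - 2) / (a + b + (t : ℝ) - 2))) *
          (a / (a + b + (n : ℝ) - 2))
        = (a / (a + b + (n : ℝ) - 2)) *
            ∏ r ∈ Finset.range (n - 2), ((b + (r : ℝ)) / (a + b + (r : ℝ))))
    ∧ ∑' m : ℕ, (a / (a + b + (m : ℝ))) *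
          ∏ r ∈ Finset.range m, ((b + (r : ℝ)) / (a + b + (r : ℝ))) = 1 := by
  have hden (m : ℕ) : 0 < a + b + m := by positivity
  refine ⟨fun n _ => ?_, ?_⟩
  · rw [prod_Icc_two_pred_eq_prod_range, mul_comm]
    congr 1
    refine prod_congr rfl fun r _ => ?_
    push_cast
    ring_nf
  · have hcompl (m : ℕ) : (b + m) / (a + b + m) = 1 - a / (a + b + m) := by
      field_simp [(hden m).ne']
      ring
    simp only [hcompl]
    exact (hasSum_mul_prod_range_one_sub_of_not_summable (fun m => (div_pos ha (hden m)).le)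
      (fun m => div_le_one_of_le₀ (by linarith) (hden m).le)
      (not_summable_div_add_natCast ha.ne' (by positivity))).tsum_eq
end
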